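/- arXiv:2208.06038 — 2 statements merged into one kernel-verified Lean document; each statement's English description precedes it below -/
import Mathlib

section
/- Define C(p) = (p + L_n)/(1 + V + L_d + p²) for p ∈ (0,1), where L_n, L_d, V are nonnegative constants with L_n/L_d ≤ 1/2 (and L_d > 0), V ≥ 0. Then C is strictly increasing on (0,1). -/
/-- `C(p) = (p + Lₙ)/(1 + V + L_d + p²)` is strictly increasing on `(0,1)` when
`0 ≤ Lₙ`, `0 < L_d`, `Lₙ/L_d ≤ 1/2`, and `0 ≤ V`. -/
theorem C_strictMonoOn (Ln Ld V : ℝ) (hLn : 0 ≤ Ln) (hLd : 0 < Ld)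
    (hratio : Ln / Ld ≤ 1 / 2) (hV : 0 ≤ V) :
    StrictMonoOn (fun p : ℝ => (p + Ln) / (1 + V + Ld + p ^ 2)) (Set.Ioo 0 1) := by
  have hLn2 : 2 * Ln ≤ Ld := by
    have := (div_le_div_iff₀ hLd (by norm_num : (0:ℝ) < 2)).mp hratio
    linarith
  intro a ha b hb hab
  have hda : 0 < 1 + V + Ld + a ^ 2 := by nlinarith [sq_nonneg a]
  have hdb : 0 < 1 + V + Ld + b ^ 2 := by nlinarith [sq_nonneg b]
  simp only
  rw [div_lt_div_iff₀ hda hdb]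
  have hkey : 0 < 1 + V + Ld - a * b - Ln * (a + b) := by
    have h1 : a * b < 1 := by nlinarith [ha.1, ha.2, hb.1, hb.2]
    have h2 : Ln * (a + b) ≤ Ld := by nlinarith [ha.1, ha.2, hb.1, hb.2]
    linarith
  nlinarith [mul_pos (sub_pos.mpr hab) hkey]
end

section
/- Let f(ε) = log(Γ(b+ε)/Γ(a+ε)) + (a−1+ε)(ψ(a+ε) − ψ(b+ε)) for ε ≥ 0, where 1 ≤ a < b. Then f is increasing in ε. -/
/-!
Writing `G(ε) = log Γ(b+ε) - log Γ(a+ε)`, the function is `G(ε) - (ε - (1-a)) G'(ε)`, the value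
at `1 - a ≤ 0` of the tangent line to `G` at `ε`. Differentiating Euler's limit formula for
`log Γ` term by term (the derivatives converge locally uniformly) gives
`G'(ε) = ψ(b+ε) - ψ(a+ε) = ∑ₖ ((a+ε+k)⁻¹ - (b+ε+k)⁻¹)`, which decreases in `ε`. So `G` is
concave, and the value at a fixed point to the left of its tangent lines increases as the point of
tangency moves to the right.
-/

open Real Filter Set Topology

/-- The digamma function `ψ = (log ∘ Γ)'`. -/
noncomputable def digamma (x : ℝ) : ℝ := deriv (fun y => Real.log (Real.Gamma y)) x

variable {d x : ℝ}

lemma inv_sub_inv_add_eq (hd : 0 ≤ d) (hx : 0 < x) : x⁻¹ - (x + d)⁻¹ = d / (x * (x + d)) := by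
  rw [inv_sub_inv hx.ne' (by positivity), add_sub_cancel_left]

lemma inv_sub_inv_add_nonneg (hd : 0 ≤ d) (hx : 0 < x) : 0 ≤ x⁻¹ - (x + d)⁻¹ := by
  rw [inv_sub_inv_add_eq hd hx]
  positivity

lemma inv_sub_inv_add_le (hd : 0 ≤ d) (hx : 0 < x) : x⁻¹ - (x + d)⁻¹ ≤ d / x ^ 2 := by
  rw [inv_sub_inv_add_eq hd hx, sq]
  gcongr
  linarith

lemma antitoneOn_inv_sub_inv_add (hd : 0 ≤ d) :
    AntitoneOn (fun x : ℝ => x⁻¹ - (x + d)⁻¹) (Ioi 0) := by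
  intro x (hx : 0 < x) y (hy : 0 < y) hxy
  simp only [inv_sub_inv_add_eq hd hx, inv_sub_inv_add_eq hd hy]
  gcongr

lemma summable_div_nat_add_sq (c : ℝ) {δ : ℝ} (hδ : 0 < δ) :
    Summable fun k : ℕ => c / (k + δ) ^ 2 := by
  have := (Real.summable_one_div_nat_add_rpow δ 2).2 one_lt_two
  have h (k : ℕ) : |(k : ℝ) + δ| ^ (2 : ℝ) = ((k : ℝ) + δ) ^ 2 := by
    rw [Real.rpow_two, abs_of_pos (by positivity)]
  simp_rw [h] at this
  simpa [div_eq_mul_one_div c] using this.mul_left c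

lemma summable_inv_add_sub_inv_add (hd : 0 ≤ d) (hx : 0 < x) :
    Summable fun k : ℕ => (x + k)⁻¹ - (x + k + d)⁻¹ := by
  refine (summable_div_nat_add_sq d hx).of_nonneg_of_le
    (fun k => inv_sub_inv_add_nonneg hd (by positivity)) fun k => ?_
  rw [add_comm (k : ℝ)]
  exact inv_sub_inv_add_le hd (by positivity)

lemma tendstoLocallyUniformlyOn_sum_inv_add_sub_inv_add (hd : 0 ≤ d) :
    TendstoLocallyUniformlyOn
      (fun n (x : ℝ) => ∑ k ∈ Finset.range (n + 1), ((x + k)⁻¹ - (x + k + d)⁻¹))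
      (fun x : ℝ => ∑' k : ℕ, ((x + k)⁻¹ - (x + k + d)⁻¹)) atTop (Ioi 0) := by
  refine tendstoLocallyUniformlyOn_of_forall_exists_nhds fun x (hx : 0 < x) => ?_
  refine ⟨Ioi (x / 2), mem_nhdsWithin_of_mem_nhds (Ioi_mem_nhds (by linarith)), ?_⟩
  have hsum := tendstoUniformlyOn_tsum_nat (summable_div_nat_add_sq d (half_pos hx))
    (f := fun k (y : ℝ) => (y + k)⁻¹ - (y + k + d)⁻¹) fun k y (hy : x / 2 < y) => by
      have hyk : 0 < y + k := by linarith [(Nat.cast_nonneg k : (0 : ℝ) ≤ k)]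
      rw [Real.norm_of_nonneg (inv_sub_inv_add_nonneg hd hyk)]
      calc (y + k)⁻¹ - (y + k + d)⁻¹ ≤ d / (y + k) ^ 2 := inv_sub_inv_add_le hd hyk
        _ ≤ d / (k + x / 2) ^ 2 := by rw [add_comm y]; gcongr
  exact fun u hu => (tendsto_add_atTop_nat 1).eventually (hsum u hu)

lemma hasDerivAt_logGammaSeq (hx : 0 < x) (n : ℕ) :
    HasDerivAt (fun y => BohrMollerup.logGammaSeq y n)
      (log n - ∑ k ∈ Finset.range (n + 1), (x + k)⁻¹) x := by
  have hlog (k : ℕ) : HasDerivAt (fun y => log (y + k)) (x + k)⁻¹ x := by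
    simpa using ((hasDerivAt_id x).add_const (k : ℝ)).log (by positivity)
  unfold BohrMollerup.logGammaSeq
  simpa using (((hasDerivAt_id x).mul_const (log n)).add_const (log n.factorial)).fun_sub
    (HasDerivAt.fun_sum fun k _ => hlog k)

lemma hasDerivAt_log_Gamma (hx : 0 < x) : HasDerivAt (fun y => log (Gamma y)) (digamma x) x := by
  have hΓ : DifferentiableAt ℝ Gamma x :=
    differentiableAt_Gamma fun m => by linarith [(Nat.cast_nonneg m : (0 : ℝ) ≤ m)]
  exact (hΓ.log (Gamma_pos_of_pos hx).ne').hasDerivAt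

lemma digamma_add_sub_digamma (hd : 0 ≤ d) (hx : 0 < x) :
    digamma (x + d) - digamma x = ∑' k : ℕ, ((x + k)⁻¹ - (x + k + d)⁻¹) := by
  have hxd : 0 < x + d := by linarith
  have hψ : HasDerivAt (fun y => log (Gamma (y + d)) - log (Gamma y))
      (digamma (x + d) - digamma x) x :=
    ((hasDerivAt_log_Gamma hxd).comp_add_const x d).sub (hasDerivAt_log_Gamma hx)
  have hseq (n : ℕ) {y : ℝ} (hy : 0 < y) :
      HasDerivAt (fun z => BohrMollerup.logGammaSeq (z + d) n - BohrMollerup.logGammaSeq z n)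
        (∑ k ∈ Finset.range (n + 1), ((y + k)⁻¹ - (y + k + d)⁻¹)) y := by
    refine (((hasDerivAt_logGammaSeq (by linarith : 0 < y + d) n).comp_add_const y d).fun_sub
      (hasDerivAt_logGammaSeq hy n)).congr_deriv ?_
    simp only [Finset.sum_sub_distrib, add_right_comm y d]
    ring
  refine hψ.unique (hasDerivAt_of_tendstoLocallyUniformlyOn isOpen_Ioi
    (tendstoLocallyUniformlyOn_sum_inv_add_sub_inv_add hd)
    (Eventually.of_forall fun n y hy => hseq n hy)
    (fun y (hy : 0 < y) => ?_) hx)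
  exact (BohrMollerup.tendsto_log_gamma (by linarith)).sub (BohrMollerup.tendsto_log_gamma hy)

lemma antitoneOn_digamma_add_sub_digamma (hd : 0 ≤ d) :
    AntitoneOn (fun x => digamma (x + d) - digamma x) (Ioi 0) := by
  intro x (hx : 0 < x) y (hy : 0 < y) hxy
  simp only [digamma_add_sub_digamma hd hx, digamma_add_sub_digamma hd hy]
  refine (summable_inv_add_sub_inv_add hd hy).tsum_le_tsum (fun k => ?_)
    (summable_inv_add_sub_inv_add hd hx)
  exact antitoneOn_inv_sub_inv_add hd (by positivity : (0 : ℝ) < x + k)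
    (by positivity : (0 : ℝ) < y + k) (by linarith)

-- The value at `x₀` of the tangent line to a concave function at `x ≥ x₀` increases with `x`.
lemma monotoneOn_sub_sub_mul_of_antitoneOn_deriv {s : Set ℝ} (hs : Convex ℝ s) {G G' : ℝ → ℝ}
    {x₀ : ℝ} (hG : ∀ x ∈ s, HasDerivAt G (G' x) x) (hG' : AntitoneOn G' s)
    (hx₀ : ∀ x ∈ s, x₀ ≤ x) : MonotoneOn (fun x => G x - (x - x₀) * G' x) s := by
  intro x hx y hy hxy
  have hIcc : Icc x y ⊆ s := hs.ordConnected.out hx hy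
  have hslope : G' y * (y - x) ≤ G y - G x := by
    refine (convex_Icc x y).mul_sub_le_image_sub_of_le_deriv
      (fun z hz => (hG z (hIcc hz)).continuousAt.continuousWithinAt)
      (fun z hz => (hG z (hIcc (interior_subset hz))).differentiableAt.differentiableWithinAt)
      (fun z hz => ?_) x (left_mem_Icc.2 hxy) y (right_mem_Icc.2 hxy) hxy
    rw [interior_Icc] at hz
    rw [(hG z (hIcc (Ioo_subset_Icc_self hz))).deriv]
    exact hG' (hIcc (Ioo_subset_Icc_self hz)) hy hz.2.le
  have hdecr : G' y ≤ G' x := hG' hx hy hxy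
  nlinarith [hx₀ x hx]

/-- For `1 ≤ a < b`, the function
`f(ε) = log(Γ(b+ε)/Γ(a+ε)) + (a−1+ε)(ψ(a+ε) − ψ(b+ε))` is increasing on `[0, ∞)`. -/
theorem kl_terms_monotone (a b : ℝ) (ha : 1 ≤ a) (hab : a < b) :
    MonotoneOn
      (fun ε => Real.log (Real.Gamma (b + ε) / Real.Gamma (a + ε)) +
        (a - 1 + ε) * (digamma (a + ε) - digamma (b + ε)))
      (Set.Ici 0) := by
  have hpos {c : ℝ} (hc : 1 ≤ c) {ε : ℝ} (hε : ε ∈ Ici (0 : ℝ)) : 0 < c + ε := by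
    linarith [mem_Ici.1 hε]
  have hG (ε : ℝ) (hε : ε ∈ Ici (0 : ℝ)) :
      HasDerivAt (fun t => log (Gamma (b + t)) - log (Gamma (a + t)))
        (digamma (b + ε) - digamma (a + ε)) ε :=
    ((hasDerivAt_log_Gamma (hpos (by linarith) hε)).comp_const_add b ε).sub
      ((hasDerivAt_log_Gamma (hpos ha hε)).comp_const_add a ε)
  have hG' : AntitoneOn (fun ε => digamma (b + ε) - digamma (a + ε)) (Ici 0) := by
    intro ε hε η hη hεη
    have := antitoneOn_digamma_add_sub_digamma (sub_nonneg.2 hab.le) (hpos ha hε) (hpos ha hη)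
      (by linarith)
    have hshift (t : ℝ) : a + t + (b - a) = b + t := by ring
    simpa only [hshift] using this
  have hlog {t : ℝ} (ht : t ∈ Ici (0 : ℝ)) :
      log (Gamma (b + t) / Gamma (a + t)) = log (Gamma (b + t)) - log (Gamma (a + t)) :=
    log_div (Gamma_pos_of_pos (hpos (by linarith) ht)).ne' (Gamma_pos_of_pos (hpos ha ht)).ne'
  intro ε hε η hη hεη
  have key := monotoneOn_sub_sub_mul_of_antitoneOn_deriv (convex_Ici 0) hG hG'
    (fun t (ht : 0 ≤ t) => (by linarith : 1 - a ≤ t)) hε hη hεη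
  dsimp only at key ⊢
  rw [hlog hε, hlog hη]
  linarith
end
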